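/- arXiv:1908.08029 — 3 statements merged into one kernel-verified Lean document; each statement's English description precedes it below -/
import Mathlib

section
/- With β = -1/(Σ c_k), one has lim_{x→∞, x real} (1/f(x) - βx) = (Σ_{k=1}^∞ c_k λ_k)/(Σ_{k=1}^∞ c_k)², where f(x) = Σ_k c_k/(λ_k - x). -/
open Filter

private lemma aux_term_bound (a l : ℕ → ℝ) (B : ℝ) (hB : ∀ k, |l k| ≤ B)
    (x : ℝ) (hx : B < x) (k : ℕ) :
    |a k * l k / (l k - x)| ≤ |a k| * (B / (x - B)) := by
  have hk1 := (abs_le.mp (hB k)).1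
  have hk2 := (abs_le.mp (hB k)).2
  have h1 : |l k - x| = x - l k := by
    rw [abs_sub_comm, abs_of_pos]; linarith
  rw [abs_div, abs_mul, mul_div_assoc]
  refine mul_le_mul_of_nonneg_left ?_ (abs_nonneg _)
  rw [h1]
  exact div_le_div₀ ((abs_nonneg _).trans (hB 0)) (hB k) (by linarith) (by linarith)

private lemma aux_rsum (a l : ℕ → ℝ) (ha : Summable a) (B : ℝ) (hB : ∀ k, |l k| ≤ B)
    (x : ℝ) (hx : B < x) : Summable fun k => a k * l k / (l k - x) := by
  rw [← summable_abs_iff]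
  exact Summable.of_nonneg_of_le (fun k => abs_nonneg _) (aux_term_bound a l B hB x hx)
    ((ha.abs).mul_right _)

private lemma aux_tendsto (a l : ℕ → ℝ) (ha : Summable a) (B : ℝ) (hB : ∀ k, |l k| ≤ B) :
    Tendsto (fun x : ℝ => ∑' k, a k * x / (l k - x)) atTop (nhds (-∑' k, a k)) := by
  have habs : Summable fun k => |a k| := ha.abs
  have hr0 : Tendsto (fun x : ℝ => ∑' k, a k * l k / (l k - x)) atTop (nhds 0) := by
    refine squeeze_zero_norm' (a := fun x : ℝ => (∑' k, |a k|) * (B / (x - B))) ?_ ?_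
    · filter_upwards [eventually_gt_atTop B] with x hx
      rw [Real.norm_eq_abs]
      have hsab : Summable fun k => |a k * l k / (l k - x)| := by
        exact Summable.of_nonneg_of_le (fun k => abs_nonneg _)
          (aux_term_bound a l B hB x hx) (habs.mul_right _)
      calc |∑' k, a k * l k / (l k - x)| ≤ ∑' k, |a k * l k / (l k - x)| := by
            simpa only [Real.norm_eq_abs] using
              norm_tsum_le_tsum_norm (f := fun k => a k * l k / (l k - x))
                (by simpa only [Real.norm_eq_abs] using hsab)
        _ ≤ ∑' k, |a k| * (B / (x - B)) :=
            Summable.tsum_le_tsum (aux_term_bound a l B hB x hx) hsab (habs.mul_right _)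
        _ = (∑' k, |a k|) * (B / (x - B)) := by rw [tsum_mul_right]
    · have h1 : Tendsto (fun x : ℝ => x - B) atTop atTop :=
        tendsto_atTop_add_const_right _ _ tendsto_id
      have h2 : Tendsto (fun x : ℝ => B / (x - B)) atTop (nhds 0) :=
        Tendsto.div_atTop tendsto_const_nhds h1
      simpa using h2.const_mul (∑' k, |a k|)
  have key : (fun x : ℝ => (-∑' k, a k) + ∑' k, a k * l k / (l k - x)) =ᶠ[atTop]
      fun x : ℝ => ∑' k, a k * x / (l k - x) := by
    filter_upwards [eventually_gt_atTop B] with x hx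
    have hne : ∀ k, l k - x ≠ 0 := fun k => by
      have := (abs_le.mp (hB k)).2
      intro h
      have : l k = x := by linarith [sub_eq_zero.mp h]
      linarith
    rw [show (-∑' k, a k) = ∑' k, -(a k) from tsum_neg.symm,
      ← Summable.tsum_add ha.neg (aux_rsum a l ha B hB x hx)]
    refine tsum_congr fun k => ?_
    field_simp [hne k]
    ring
  have hlim : Tendsto (fun x : ℝ => (-∑' k, a k) + ∑' k, a k * l k / (l k - x)) atTop
      (nhds (-∑' k, a k)) := by
    simpa using tendsto_const_nhds.add hr0
  exact hlim.congr' key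

/-- With `β = -1/(∑' c k)`,
`lim_{x→∞} (1/f(x) - β x) = (∑' k, c k * λ k)/(∑' k, c k)²` for `f(x) = ∑' k, c k/(λ k - x)`. -/
theorem wolff_denjoy_alpha_limit
    (c : ℕ → ℝ) (l : ℕ → ℝ)
    (hc : ∀ k, 0 < c k) (hsum : Summable c)
    (hbdd : ∃ B, ∀ k, |l k| ≤ B) :
    Filter.Tendsto
      (fun x : ℝ => 1 / (∑' k, c k / (l k - x)) - (-1 / ∑' k, c k) * x) Filter.atTop
      (nhds ((∑' k, c k * l k) / (∑' k, c k) ^ 2)) := by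
  obtain ⟨B, hB⟩ := hbdd
  have hB0 : 0 ≤ B := (abs_nonneg _).trans (hB 0)
  set S := ∑' k, c k with hSdef
  set T := ∑' k, c k * l k with hTdef
  have hS : 0 < S := Summable.tsum_pos hsum (fun k => (hc k).le) 0 (hc 0)
  have hT : Summable fun k => c k * l k := by
    rw [← summable_abs_iff]
    refine Summable.of_nonneg_of_le (fun k => abs_nonneg _) (fun k => ?_) (hsum.mul_right B)
    rw [abs_mul, abs_of_pos (hc k)]
    exact mul_le_mul_of_nonneg_left (hB k) (hc k).le
  -- limits of numerator and denominator
  have hG : Tendsto (fun x : ℝ => ∑' k, (c k * l k) * x / (l k - x)) atTop (nhds (-T)) :=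
    aux_tendsto _ l hT B hB
  have hA : Tendsto (fun x : ℝ => ∑' k, c k * x / (l k - x)) atTop (nhds (-S)) :=
    aux_tendsto _ l hsum B hB
  have hD : Tendsto (fun x : ℝ => S * ∑' k, c k * x / (l k - x)) atTop (nhds (S * (-S))) :=
    hA.const_mul S
  have hne : S * (-S) ≠ 0 := by
    have : S ≠ 0 := ne_of_gt hS
    intro h
    rcases mul_eq_zero.mp h with h' | h'
    · exact this h'
    · exact this (by linarith [neg_eq_zero.mp h'])
  have hdiv : Tendsto
      (fun x : ℝ => (∑' k, (c k * l k) * x / (l k - x)) /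
        (S * ∑' k, c k * x / (l k - x))) atTop (nhds ((-T) / (S * (-S)))) :=
    hG.div hD hne
  have hval : (-T) / (S * (-S)) = T / S ^ 2 := by
    rw [mul_neg, div_neg, neg_div, neg_neg, sq]
  rw [← hval]
  refine hdiv.congr' ?_
  filter_upwards [eventually_gt_atTop (max B 0)] with x hx
  have hxB : B < x := lt_of_le_of_lt (le_max_left _ _) hx
  have hx0 : x ≠ 0 := ne_of_gt (lt_of_le_of_lt (le_max_right _ _) hx)
  have hlne : ∀ k, l k - x ≠ 0 := fun k => by
    have := (abs_le.mp (hB k)).2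
    intro h
    have : l k = x := by linarith [sub_eq_zero.mp h]
    linarith
  -- summability of f terms
  have hs1 : Summable fun k => c k / (l k - x) := by
    rw [← summable_abs_iff]
    refine Summable.of_nonneg_of_le (fun k => abs_nonneg _) (fun k => ?_)
      (hsum.mul_right (1 / (x - B)))
    have hk2 := (abs_le.mp (hB k)).2
    have h1 : |l k - x| = x - l k := by rw [abs_sub_comm, abs_of_pos]; linarith
    rw [abs_div, abs_of_pos (hc k), h1, div_eq_mul_one_div]
    refine mul_le_mul_of_nonneg_left ?_ (hc k).le
    exact div_le_div₀ (by norm_num) le_rfl (by linarith) (by linarith)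
  set sf := ∑' k, c k / (l k - x) with hsfdef
  -- sf < 0
  have htermneg : ∀ k, c k / (l k - x) < 0 := fun k => by
    have hk2 := (abs_le.mp (hB k)).2
    exact div_neg_of_pos_of_neg (hc k) (by linarith)
  have hsfneg : sf < 0 := by
    have hpos : 0 < ∑' k, -(c k / (l k - x)) :=
      Summable.tsum_pos hs1.neg (fun k => by linarith [htermneg k]) 0 (by linarith [htermneg 0])
    rw [tsum_neg] at hpos
    simpa [hsfdef] using neg_pos.mp (by simpa using hpos)
  have hsfne : sf ≠ 0 := ne_of_lt hsfneg
  -- A = x * sf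
  have hAeq : (∑' k, c k * x / (l k - x)) = x * sf := by
    rw [hsfdef, ← tsum_mul_left]
    exact tsum_congr fun k => by ring
  -- gg summable and A = -S + gg
  have hggsum : Summable fun k => c k * l k / (l k - x) :=
    aux_rsum c l hsum B hB x hxB
  have hAgg : (∑' k, c k * x / (l k - x)) = -S + ∑' k, c k * l k / (l k - x) := by
    rw [hSdef, show (-∑' k, c k) = ∑' k, -(c k) from tsum_neg.symm,
      ← Summable.tsum_add hsum.neg hggsum]
    refine tsum_congr fun k => ?_
    field_simp [hlne k]
    ring
  -- G = x * gg
  have hGeq : (∑' k, (c k * l k) * x / (l k - x)) = x * ∑' k, c k * l k / (l k - x) := by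
    rw [← tsum_mul_left]
    exact tsum_congr fun k => by ring
  -- assemble
  have hgg : (∑' k, c k * l k / (l k - x)) = S + x * sf := by
    rw [← hAeq, hAgg]; ring
  rw [hGeq, hgg, hAeq]
  have hSne : S ≠ 0 := ne_of_gt hS
  field_simp
  ring
end

section
/- If λ is a root of λ² - λ + 1 = 0, then the function f(z) = 1/(z-λ) + 1/(z-1) + 1/z has a multiple zero, even though all coefficients are positive; this shows that for non-real poles, positivity of coefficients does not guarantee simple zeros. -/
/-- If `λ² - λ + 1 = 0` then `f(z) = 1/(z-λ) + 1/(z-1) + 1/z` has a multiple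
zero: there is `z₀` (not a pole) with `f(z₀) = 0` and `f'(z₀) = 0`. -/
theorem wolff_denjoy_complex_poles_multiple_zero
    (lam : ℂ) (hlam : lam ^ 2 - lam + 1 = 0) :
    ∃ z₀ : ℂ, z₀ ≠ lam ∧ z₀ ≠ 1 ∧ z₀ ≠ 0 ∧
      (1 / (z₀ - lam) + 1 / (z₀ - 1) + 1 / z₀ = 0) ∧
      HasDerivAt (fun z : ℂ => 1 / (z - lam) + 1 / (z - 1) + 1 / z) 0 z₀ := by
  have h2l : (1 : ℂ) - 2 * lam ≠ 0 := by
    intro h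
    have h3 : (3 : ℂ) = 0 := by linear_combination 4 * hlam + (2 * lam - 1) * h
    norm_num at h3
  have hl2 : lam - 2 ≠ 0 := by
    intro h
    have h3 : (3 : ℂ) = 0 := by linear_combination hlam - (lam + 1) * h
    norm_num at h3
  have h1l : (1 : ℂ) + lam ≠ 0 := by
    intro h
    have h3 : (3 : ℂ) = 0 := by linear_combination hlam - (lam - 2) * h
    norm_num at h3
  have ha : (1 + lam) / 3 - lam ≠ 0 := by
    intro h; exact h2l (by linear_combination 3 * h)
  have hb : (1 + lam) / 3 - 1 ≠ 0 := by
    intro h; exact hl2 (by linear_combination 3 * h)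
  have hc : (1 + lam) / 3 ≠ 0 := by
    intro h; exact h1l (by linear_combination 3 * h)
  have h0 : lam ≠ 0 := by
    intro h; rw [h] at hlam; norm_num at hlam
  have h1 : (1 : ℂ) - lam ≠ 0 := by
    intro h
    have h3 : (1 : ℂ) = 0 := by linear_combination hlam + lam * h
    norm_num at h3
  have eA : ((1 + lam) / 3 - lam) ^ 2 = -1 / 3 := by linear_combination (4 / 9 : ℂ) * hlam
  have eB : ((1 + lam) / 3 - 1) ^ 2 = (1 - lam) / 3 := by linear_combination (1 / 9 : ℂ) * hlam
  have eC : ((1 + lam) / 3) ^ 2 = lam / 3 := by linear_combination (1 / 9 : ℂ) * hlam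
  refine ⟨(1 + lam) / 3, sub_ne_zero.mp ha, sub_ne_zero.mp hb, hc, ?_, ?_⟩
  · have fA : (1 + lam) / 3 - lam = (1 - 2 * lam) / 3 := by ring
    have fB : (1 + lam) / 3 - 1 = (lam - 2) / 3 := by ring
    rw [fA, fB]
    field_simp
    linear_combination (-9 : ℂ) * hlam
  · have H1 : HasDerivAt (fun z : ℂ => 1 / (z - lam))
        (-1 / ((1 + lam) / 3 - lam) ^ 2) ((1 + lam) / 3) := by
      simpa [one_div, Pi.inv_def] using ((hasDerivAt_id ((1 + lam) / 3)).sub_const lam).inv ha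
    have H2 : HasDerivAt (fun z : ℂ => 1 / (z - 1))
        (-1 / ((1 + lam) / 3 - 1) ^ 2) ((1 + lam) / 3) := by
      simpa [one_div, Pi.inv_def] using ((hasDerivAt_id ((1 + lam) / 3)).sub_const 1).inv hb
    have H3 : HasDerivAt (fun z : ℂ => 1 / z)
        (-1 / ((1 + lam) / 3) ^ 2) ((1 + lam) / 3) := by
      simpa [one_div, Pi.inv_def] using (hasDerivAt_id ((1 + lam) / 3)).inv hc
    have H := (H1.add H2).add H3
    convert H using 1
    · rfl
    · rfl
    · rfl
    rw [eA, eB, eC]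
    field_simp
    linear_combination (3 : ℂ) * hlam
end

section
/- Let A be a closed densely defined operator, λ_1 ≠ λ_2 in the resolvent set, a, b > 0 with a+b=1. Then aR(λ_1,A) + bR(λ_2,A) is injective (left invertible) if and only if aλ_2 + bλ_1 is not an eigenvalue of A. -/
/-- For a closed densely defined operator `A`, `λ₁ ≠ λ₂` in the resolvent set,
`a, b > 0`, `a + b = 1`: the operator `a R(λ₁,A) + b R(λ₂,A)` is injective (left invertible)
iff `aλ₂ + bλ₁` is not an eigenvalue of `A`. -/
theorem resolvent_convex_combination_injective_iff
    {X : Type*} [NormedAddCommGroup X] [NormedSpace ℂ X] [CompleteSpace X]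
    (D : Submodule ℂ X) (hdense : Dense (D : Set X))
    (A : D →ₗ[ℂ] X)
    (hclosed : IsClosed {p : X × X | ∃ h : p.1 ∈ D, A ⟨p.1, h⟩ = p.2})
    (l1 l2 : ℂ) (hne : l1 ≠ l2)
    (R1 R2 : X →L[ℂ] X)
    (hR1mem : ∀ x, R1 x ∈ D) (hR2mem : ∀ x, R2 x ∈ D)
    (hR1 : ∀ x, l1 • R1 x - A ⟨R1 x, hR1mem x⟩ = x)
    (hR1' : ∀ d : D, R1 (l1 • (d : X) - A d) = d)
    (hR2 : ∀ x, l2 • R2 x - A ⟨R2 x, hR2mem x⟩ = x)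
    (hR2' : ∀ d : D, R2 (l2 • (d : X) - A d) = d)
    (a b : ℝ) (ha : 0 < a) (hb : 0 < b) (hab : a + b = 1) :
    Function.Injective (fun x : X => (a : ℂ) • R1 x + (b : ℂ) • R2 x) ↔
      ¬∃ d : D, d ≠ 0 ∧ A d = ((a : ℂ) * l2 + (b : ℂ) * l1) • (d : X) := by
  have hab' : (a : ℂ) + (b : ℂ) = 1 := by exact_mod_cast hab
  have hbne : (b : ℂ) ≠ 0 := by exact_mod_cast hb.ne'
  have hl : l1 - l2 ≠ 0 := sub_ne_zero.mpr hne
  set μ : ℂ := (a : ℂ) * l2 + (b : ℂ) * l1 with hμdef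
  -- A on the range of R2
  have hAd : ∀ x, A ⟨R2 x, hR2mem x⟩ = l2 • R2 x - x := by
    intro x
    have h := hR2 x
    rw [sub_eq_iff_eq_add] at h
    rw [eq_sub_iff_add_eq, add_comm, ← h]
  -- injectivity of R1
  have hR1inj : Function.Injective R1 := by
    intro u v huv
    have hDeq : (⟨R1 u, hR1mem u⟩ : D) = ⟨R1 v, hR1mem v⟩ := Subtype.ext huv
    rw [← hR1 u, ← hR1 v, hDeq, huv]
  -- resolvent identity direction we need
  have hRR : ∀ x, (l1 - l2) • R1 (R2 x) = R2 x - R1 x := by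
    intro x
    have h : R1 (l1 • R2 x - A ⟨R2 x, hR2mem x⟩) = R2 x := hR1' ⟨R2 x, hR2mem x⟩
    rw [hAd x] at h
    have h2 : R1 ((l1 - l2) • R2 x + x) = R2 x := by
      rw [show (l1 - l2) • R2 x + x = l1 • R2 x - (l2 • R2 x - x) by module]
      exact h
    rw [map_add, map_smul] at h2
    have := congrArg (fun z => z - R1 x) h2
    simpa using this
  -- key factorization: a R1 + b R2 = R1 ∘ (μ - A) ∘ R2
  have key : ∀ x : X, (a : ℂ) • R1 x + (b : ℂ) • R2 x
      = R1 (μ • R2 x - A ⟨R2 x, hR2mem x⟩) := by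
    intro x
    have e1 : μ • R2 x - A ⟨R2 x, hR2mem x⟩
        = ((b : ℂ) * (l1 - l2)) • R2 x + x := by
      rw [hAd x]
      match_scalars
      · linear_combination l2 * hab'
      · ring
    rw [e1, map_add, map_smul, mul_smul, hRR x]
    match_scalars
    · linear_combination hab'
    · ring
  constructor
  · intro hinj h
    obtain ⟨d, hd0, hAeig⟩ := h
    set x : X := l2 • (d : X) - A d with hxdef
    have hR2x : R2 x = (d : X) := hR2' d
    have hDeq : (⟨R2 x, hR2mem x⟩ : D) = d := Subtype.ext hR2x
    have hT : (a : ℂ) • R1 x + (b : ℂ) • R2 x = 0 := by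
      rw [key x, hDeq, hR2x, hAeig, sub_self, map_zero]
    have hx0 : x = 0 := by
      have := hinj (a₁ := x) (a₂ := 0) (by simpa using hT)
      exact this
    have hxval : x = ((b : ℂ) * (l2 - l1)) • (d : X) := by
      rw [hxdef, hAeig]
      match_scalars
      linear_combination -l2 * hab'
    rw [hxval] at hx0
    have : ((b : ℂ) * (l2 - l1)) ≠ 0 :=
      mul_ne_zero hbne (sub_ne_zero.mpr (Ne.symm hne))
    have hd0' : (d : X) ≠ 0 := fun h => hd0 (Subtype.ext h)
    exact hd0' (by
      have := smul_eq_zero.mp hx0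
      tauto)
  · intro hno x y hxy
    simp only at hxy
    rw [key x, key y] at hxy
    have heq : μ • R2 x - A ⟨R2 x, hR2mem x⟩ = μ • R2 y - A ⟨R2 y, hR2mem y⟩ :=
      hR1inj hxy
    set dx : D := ⟨R2 x, hR2mem x⟩
    set dy : D := ⟨R2 y, hR2mem y⟩
    have h3 : A dx - A dy = μ • R2 x - μ • R2 y := by
      rw [sub_eq_sub_iff_add_eq_add] at heq ⊢
      rw [add_comm]
      exact heq.symm
    have hcoe : ((dx - dy : D) : X) = R2 x - R2 y := rfl
    have hAe : A (dx - dy) = μ • ((dx - dy : D) : X) := by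
      rw [map_sub, hcoe, h3]; module
    have hdxy : dx = dy := by
      by_contra hne'
      exact hno ⟨dx - dy, sub_ne_zero.mpr hne', hAe⟩
    have hR2eq : R2 x = R2 y := congrArg Subtype.val hdxy
    have hADeq : A dx = A dy := congrArg A hdxy
    rw [← hR2 x, ← hR2 y]
    show l2 • R2 x - A dx = l2 • R2 y - A dy
    rw [hR2eq, hADeq]
end
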